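/- arXiv:1809.04658 — 2 statements merged into one kernel-verified Lean document; each statement's English description precedes it below -/
import Mathlib

section
/- The series topology ℕ_{aₙ} is Hausdorff if and only if ∑_{n∈ℕ} aₙ converges. -/
/-! If `∑ aₙ` converges, every subset of `ℕ` is closed and the topology is discrete. Conversely,
disjoint open neighbourhoods of `0` and `1` have proper closed complements, which cover `ℕ`;
a series summable over each of two sets covering `ℕ` is summable. -/

open Set Filter Topology

/-- The topology on `ℕ` whose closed sets are `{A | ∑_{n ∈ A} a n < ∞} ∪ {univ}`. -/
noncomputable def seriesTopology (a : ℕ → ℝ) : TopologicalSpace ℕ :=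
  TopologicalSpace.ofClosed {A : Set ℕ | Summable (A.indicator a) ∨ A = Set.univ}
    (Or.inl (by rw [Set.indicator_empty]; exact summable_zero))
    (fun 𝒮 h𝒮 => by
      by_cases h : ∃ A ∈ 𝒮, Summable (A.indicator a)
      · obtain ⟨A, hA, hsum⟩ := h
        left
        have hsub : ⋂₀ 𝒮 ⊆ A := Set.sInter_subset_of_mem hA
        have h2 := hsum.indicator (⋂₀ 𝒮)
        rwa [Set.indicator_indicator, Set.inter_eq_self_of_subset_left hsub] at h2
      · right
        push_neg at h
        rw [Set.sInter_eq_univ]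
        intro A hA
        rcases h𝒮 hA with hs | h1
        · exact absurd hs (h A hA)
        · exact h1)
    (fun A hA B hB => by
      rcases hA with hA | rfl
      · rcases hB with hB | rfl
        · left
          have hBA : Summable ((B \ A).indicator a) := by
            have h2 := hB.indicator (B \ A)
            rwa [Set.indicator_indicator,
              Set.inter_eq_self_of_subset_left Set.diff_subset] at h2
          have hsum := hA.add hBA
          have heq : (A ∪ B).indicator a = A.indicator a + (B \ A).indicator a := by
            rw [← Set.union_diff_self,
              Set.indicator_union_of_disjoint disjoint_sdiff_self_right]; rfl
          rw [heq, Pi.add_def]; exact hsum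
        · right; rw [Set.union_univ]
      · right; rw [Set.univ_union])

theorem Summable.of_indicator_of_union_eq_univ {ι α : Type*} [UniformSpace α] [AddCommGroup α]
    [IsUniformAddGroup α] [CompleteSpace α] {f : ι → α} {s t : Set ι}
    (hs : Summable (s.indicator f)) (ht : Summable (t.indicator f)) (hst : s ∪ t = univ) :
    Summable f := by
  have hcompl : sᶜ.indicator (t.indicator f) = sᶜ.indicator f := by
    rw [indicator_indicator, inter_eq_self_of_subset_left]
    rwa [compl_subset_iff_union]
  rw [← indicator_self_add_compl s f, ← hcompl]
  exact hs.add (ht.indicator sᶜ)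

theorem isOpen_seriesTopology_iff {a : ℕ → ℝ} {U : Set ℕ} :
    IsOpen[seriesTopology a] U ↔ Summable (Uᶜ.indicator a) ∨ Uᶜ = univ :=
  Iff.rfl

theorem summable_indicator_compl_of_isOpen {a : ℕ → ℝ} {U : Set ℕ} {n : ℕ}
    (hU : IsOpen[seriesTopology a] U) (hn : n ∈ U) : Summable (Uᶜ.indicator a) :=
  (isOpen_seriesTopology_iff.mp hU).resolve_right fun h ↦ (h ▸ mem_univ n : n ∈ Uᶜ) hn

theorem discreteTopology_seriesTopology {a : ℕ → ℝ} (ha : Summable a) :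
    @DiscreteTopology ℕ (seriesTopology a) :=
  @DiscreteTopology.mk _ (seriesTopology a) <| eq_bot_of_singletons_open fun _ ↦
    isOpen_seriesTopology_iff.mpr <| .inl <| ha.indicator _

theorem t2_iff_summable_general (a : ℕ → ℝ) :
    @T2Space ℕ (seriesTopology a) ↔ Summable a := by
  let := seriesTopology a
  refine ⟨fun _ ↦ ?_, fun ha ↦ have := discreteTopology_seriesTopology ha; inferInstance⟩
  obtain ⟨U, V, hU, hV, h0U, h1V, hUV⟩ := t2_separation (zero_ne_one' ℕ)
  refine (summable_indicator_compl_of_isOpen hU h0U).of_indicator_of_union_eq_univ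
    (summable_indicator_compl_of_isOpen hV h1V) ?_
  rw [← compl_inter, hUV.inter_eq, compl_empty]

/-- The series topology `ℕ_{aₙ}` is Hausdorff iff `∑ aₙ` converges. -/
theorem t2_iff_summable (a : ℕ → ℝ) (ha : ∀ n, 0 < a n) :
    @T2Space ℕ (seriesTopology a) ↔ Summable a :=
  t2_iff_summable_general a
end

section
/- If ∑_{n∈ℕ} aₙ diverges and Y is a metrizable topological space, then every continuous function f : ℕ_{aₙ} → Y is constant. -/
open Set Filter Topology

/-! A clopen set of `ℕ_{aₙ}` and its complement are both closed, so unless one of them is all of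
`ℕ` both carry summable sub-series of `∑ aₙ`, which would then converge: `ℕ_{aₙ}` is
preconnected. The image of `f` is a countable preconnected subset of a completely regular space,
hence a single point. -/

theorem PreconnectedSpace.constant_of_countable_range {X Y : Type*} [TopologicalSpace X]
    [PreconnectedSpace X] [TopologicalSpace Y] [T35Space Y] {f : X → Y} (hf : Continuous f)
    (hcount : (range f).Countable) (x y : X) : f x = f y :=
  have := hcount.totallySeparatedSpace
  totallyDisconnectedSpace_subtype_iff.1 inferInstance _ subset_rfl (isPreconnected_range hf)
    (mem_range_self x) (mem_range_self y)

theorem isClosed_seriesTopology_iff {a : ℕ → ℝ} {A : Set ℕ} :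
    IsClosed[seriesTopology a] A ↔ Summable (A.indicator a) ∨ A = univ := by
  rw [← @isOpen_compl_iff _ _ (seriesTopology a)]
  change Aᶜᶜ ∈ {A : Set ℕ | _} ↔ _
  rw [compl_compl]
  rfl

theorem preconnectedSpace_seriesTopology {a : ℕ → ℝ} (hdiv : ¬ Summable a) :
    @PreconnectedSpace ℕ (seriesTopology a) := by
  let := seriesTopology a
  refine preconnectedSpace_iff_clopen.2 fun U hU => ?_
  by_contra! hne
  have hUsum : Summable (U.indicator a) :=
    (isClosed_seriesTopology_iff.1 hU.isClosed).resolve_right hne.2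
  have hUcsum : Summable (Uᶜ.indicator a) :=
    (isClosed_seriesTopology_iff.1 hU.isOpen.isClosed_compl).resolve_right (compl_ne_univ.2 hne.1)
  exact hdiv (by simpa [indicator_self_add_compl] using hUsum.add hUcsum)

theorem continuous_to_metrizable_constant_general (a : ℕ → ℝ)
    (hdiv : ¬ Summable a) {Y : Type*} [TopologicalSpace Y]
    [TopologicalSpace.MetrizableSpace Y] (f : ℕ → Y)
    (hf : @Continuous ℕ Y (seriesTopology a) _ f) : ∃ c, ∀ n, f n = c :=
  let := seriesTopology a
  have := preconnectedSpace_seriesTopology hdiv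
  ⟨f 0, fun n => PreconnectedSpace.constant_of_countable_range hf (countable_range f) n 0⟩

/-- If `∑ aₙ` diverges, every continuous function from `ℕ_{aₙ}` to a metrizable space
is constant. -/
theorem continuous_to_metrizable_constant (a : ℕ → ℝ) (ha : ∀ n, 0 < a n)
    (hdiv : ¬ Summable a) {Y : Type*} [TopologicalSpace Y]
    [TopologicalSpace.MetrizableSpace Y] (f : ℕ → Y)
    (hf : @Continuous ℕ Y (seriesTopology a) _ f) : ∃ c, ∀ n, f n = c :=
  continuous_to_metrizable_constant_general a hdiv f hf
end
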